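/- Positivity of the Fock state: for any finite collection f₁,…,f_N in a complex inner product space S and complex coefficients c₁,…,c_N, the sum Σ_{n,m} cₙ·conj(c_m)·exp(−‖fₙ−f_m‖²/4)·exp(−(i/2)·Im⟨fₙ,f_m⟩) is a nonnegative real number. -/

import Mathlib

/-!
Expanding `‖fₙ - fₘ‖²` turns the kernel into `e^{-‖fₙ‖²/4} e^{-‖fₘ‖²/4} e^{⟨fₘ,fₙ⟩/2}`, so the sum
is the quadratic form of the entrywise exponential of half the (transposed) Gram matrix, evaluated
at `(conj cₙ · e^{-‖fₙ‖²/4})ₙ`. By the Schur product theorem every entrywise power of a positive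
semidefinite matrix is positive semidefinite, and the entrywise exponential is a series of these
with positive coefficients.
-/

open scoped ComplexOrder ComplexConjugate Matrix Nat InnerProductSpace

namespace Matrix

variable {n : Type*} [Fintype n]

theorem PosSemidef.map_pow {𝕜 : Type*} [RCLike 𝕜] {A : Matrix n n 𝕜} (hA : A.PosSemidef)
    (k : ℕ) : (A.map (· ^ k)).PosSemidef := by
  induction k with
  | zero => simpa [vecMulVec, Matrix.map] using posSemidef_vecMulVec_self_star (1 : n → 𝕜)
  | succ k ih =>
    convert ih.hadamard hA using 1
    ext i j
    simp [pow_succ]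

theorem hasSum_star_dotProduct_map_pow_mulVec (A : Matrix n n ℂ) (x : n → ℂ) :
    HasSum (fun k : ℕ ↦ (k ! : ℂ)⁻¹ • (star x ⬝ᵥ A.map (· ^ k) *ᵥ x))
      (star x ⬝ᵥ A.map Complex.exp *ᵥ x) := by
  have hentry (i j : n) :
      HasSum (fun k : ℕ ↦ (k ! : ℂ)⁻¹ • A i j ^ k) (Complex.exp (A i j)) := by
    rw [Complex.exp_eq_exp_ℂ]
    exact NormedSpace.exp_series_hasSum_exp' _
  simp only [dotProduct, mulVec, Finset.mul_sum, Finset.smul_sum, map_apply]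
  refine hasSum_sum fun i _ ↦ hasSum_sum fun j _ ↦ ?_
  rw [← mul_assoc]
  refine (((hentry i j).mul_left (star x i)).mul_right (x j)).congr_fun fun k ↦ ?_
  rw [smul_eq_mul]
  ring

theorem PosSemidef.map_exp {A : Matrix n n ℂ} (hA : A.PosSemidef) :
    (A.map Complex.exp).PosSemidef := by
  refine .of_dotProduct_mulVec_nonneg ?_ fun x ↦ ?_
  · ext i j
    simp [← Complex.exp_conj, ← hA.isHermitian.apply i j]
  · exact (hasSum_star_dotProduct_map_pow_mulVec A x).nonneg fun k ↦
      smul_nonneg (by positivity) ((hA.map_pow k).dotProduct_mulVec_nonneg x)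

end Matrix

theorem exp_neg_norm_sub_sq_mul_exp_im_inner {S : Type*} [NormedAddCommGroup S]
    [InnerProductSpace ℂ S] (u v : S) :
    (Real.exp (-‖u - v‖ ^ 2 / 4) : ℂ) * Complex.exp (-(Complex.I / 2) * ((⟪u, v⟫_ℂ).im : ℂ)) =
      Real.exp (-‖u‖ ^ 2 / 4) * Real.exp (-‖v‖ ^ 2 / 4) * Complex.exp (2⁻¹ * ⟪v, u⟫_ℂ) := by
  have hnorm : ‖u - v‖ ^ 2 = ‖u‖ ^ 2 - 2 * (⟪u, v⟫_ℂ).re + ‖v‖ ^ 2 := norm_sub_sq (𝕜 := ℂ) u v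
  have hinner : ⟪v, u⟫_ℂ = (⟪u, v⟫_ℂ).re - (⟪u, v⟫_ℂ).im * Complex.I := by
    rw [← inner_conj_symm v u]
    exact RCLike.conj_eq_re_sub_im _
  simp only [Complex.ofReal_exp, ← Complex.exp_add, hnorm, hinner]
  congr 1
  push_cast
  ring

/-- Positivity of the Fock state: for any `f₁,…,f_N` in a complex inner product
space and coefficients `c₁,…,c_N`, the sum
`Σₙₘ cₙ·conj(c_m)·e^{−‖fₙ−f_m‖²/4}·e^{−(i/2)·Im⟨fₙ,f_m⟩}` is a nonnegative
real number. -/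
theorem stmt_18 {S : Type*} [NormedAddCommGroup S] [InnerProductSpace ℂ S]
    (N : ℕ) (c : Fin N → ℂ) (f : Fin N → S) :
    ∃ r : ℝ, 0 ≤ r ∧
      (∑ n : Fin N, ∑ m : Fin N,
        c n * (starRingEnd ℂ) (c m) *
          (Real.exp (-‖f n - f m‖ ^ 2 / 4) : ℂ) *
          Complex.exp (-(Complex.I / 2) * (((inner ℂ (f n) (f m) : ℂ)).im : ℂ)))
        = (r : ℂ) := by
  have hpsd : (((2⁻¹ : ℂ) • (Matrix.gram ℂ f)ᵀ).map Complex.exp).PosSemidef :=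
    ((Matrix.posSemidef_gram ℂ f).transpose.smul (inv_nonneg.mpr zero_le_two)).map_exp
  obtain ⟨r, hr, hquad⟩ := RCLike.nonneg_iff_exists_ofReal.mp <|
    hpsd.dotProduct_mulVec_nonneg fun n ↦ conj (c n) * Real.exp (-‖f n‖ ^ 2 / 4)
  refine ⟨r, hr, Eq.trans ?_ hquad.symm⟩
  simp only [dotProduct, Matrix.mulVec, Finset.mul_sum]
  refine Finset.sum_congr rfl fun n _ ↦ Finset.sum_congr rfl fun m _ ↦ ?_
  simp only [mul_assoc, exp_neg_norm_sub_sq_mul_exp_im_inner]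
  simp only [Pi.star_apply, star_mul', RCLike.star_def, Complex.conj_conj, Complex.conj_ofReal,
    Matrix.map_apply, Matrix.smul_apply, Matrix.transpose_apply, Matrix.gram_apply, smul_eq_mul]
  ring
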